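/- arXiv:2304.02357 — 4 statements merged into one kernel-verified Lean document; each statement's English description precedes it below -/
import Mathlib

section
/- Let 1 → N → G → Q → 1 be a short exact sequence of groups with N finitely generated. If Q has no nontrivial finite quotients, then the conjugation action of Q on the abelianization H₁(N,ℤ) = N/[N,N] is trivial. -/
open scoped DirectSum

/-- In a finitely generated commutative group, an element divisible by every
positive integer is trivial. -/
theorem aux_divisible_eq_one {A : Type*} [CommGroup A] [Group.FG A] (a : A)
    (h : ∀ m : ℕ, 0 < m → ∃ b : A, b ^ m = a) : a = 1 := by
  haveI : AddGroup.FG (Additive A) := GroupFG.iff_add_fg.mp ‹_›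
  obtain ⟨nn, ι, fι, p, hp, e, ⟨eq⟩⟩ :=
    AddCommGroup.equiv_free_prod_directSum_zmod (Additive A)
  haveI : ∀ i : ι, NeZero (p i ^ e i) := fun i =>
    ⟨pow_ne_zero _ (hp i).ne_zero⟩
  haveI : Finite (⨁ i : ι, ZMod (p i ^ e i)) :=
    Finite.of_equiv _ DFinsupp.equivFunOnFintype.symm
  set x := eq (Additive.ofMul a) with hx
  have key : ∀ m : ℕ, 0 < m → ∃ y, m • y = x := by
    intro m hm
    obtain ⟨b, hb⟩ := h m hm
    refine ⟨eq (Additive.ofMul b), ?_⟩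
    rw [← map_nsmul, hx, ← ofMul_pow, hb]
  have h2 : x.2 = 0 := by
    have hcard : 0 < Nat.card (⨁ i : ι, ZMod (p i ^ e i)) := Nat.card_pos
    obtain ⟨y, hy⟩ := key _ hcard
    have : x.2 = Nat.card (⨁ i : ι, ZMod (p i ^ e i)) • y.2 := by
      rw [← hy]; rfl
    rw [this]
    exact card_nsmul_eq_zero'
  have h1 : x.1 = 0 := by
    ext j
    by_contra hc
    set c : ℤ := x.1 j with hcj
    have hc0 : c ≠ 0 := hc
    obtain ⟨y, hy⟩ := key (c.natAbs + 1) (Nat.succ_pos _)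
    have hdvd : ((c.natAbs + 1 : ℕ) : ℤ) ∣ c := by
      refine ⟨y.1 j, ?_⟩
      have : x.1 j = (c.natAbs + 1) • (y.1 j) := by rw [← hy]; rfl
      simpa [nsmul_eq_mul] using this
    have hle : ((c.natAbs + 1 : ℕ) : ℤ) ≤ |c| :=
      Int.le_of_dvd (abs_pos.mpr hc0) ((dvd_abs _ _).mpr hdvd)
    rw [Int.abs_eq_natAbs] at hle
    have : c.natAbs + 1 ≤ c.natAbs := by exact_mod_cast hle
    omega
  have h0 : eq (Additive.ofMul a) = eq 0 := by
    rw [map_zero, ← hx]; exact Prod.ext h1 h2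
  exact ofMul_eq_zero.mp (eq.injective h0)

/-- let N be a finitely generated normal subgroup of G with quotient
Q = G/N having no nontrivial finite quotients. Then the conjugation action of G
(hence the induced action of Q) on the abelianization N/[N,N] is trivial. -/
theorem conjugation_action_on_abelianization_trivial
    (G : Type*) [Group G] (N : Subgroup G) [hN : N.Normal]
    (hfg : Group.FG ↥N)
    (hQ : ∀ (H : Type) [Group H] [Finite H] (f : G ⧸ N →* H) (x : G ⧸ N), f x = 1)
    (g : G) (n : ↥N) :
    Abelianization.of (⟨g * ↑n * g⁻¹, hN.conj_mem ↑n n.2 g⟩ : ↥N) =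
      Abelianization.of n := by
  classical
  haveI := hfg
  set A := Abelianization ↥N with hA
  haveI : Group.FG A := by
    refine Group.fg_of_surjective (f := Abelianization.of (G := ↥N)) ?_
    exact fun x => Quotient.inductionOn x fun c => ⟨c, rfl⟩
  -- the conjugation action of G on A
  set θ : G →* MulAut A := MonoidHom.mk'
      (fun g => (MulAut.conjNormal (H := N) g).abelianizationCongr)
      (by
        intro g₁ g₂
        apply MulEquiv.toMonoidHom_injective
        apply Abelianization.hom_ext
        ext m
        simp [map_mul]) with hθ
  have hθof : ∀ (g : G) (m : ↥N), θ g (Abelianization.of m)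
      = Abelianization.of (MulAut.conjNormal (H := N) g m) := fun _ _ => rfl
  have hθN : ∀ x ∈ N, θ x = 1 := by
    intro x hx
    apply MulEquiv.toMonoidHom_injective
    apply Abelianization.hom_ext
    ext m
    have h1 : MulAut.conjNormal (H := N) x m
        = (⟨x, hx⟩ : ↥N) * m * (⟨x, hx⟩ : ↥N)⁻¹ := by
      ext; simp
    simp only [MulEquiv.coe_toMonoidHom, MonoidHom.comp_apply, hθof, h1,
      MulAut.one_apply, map_mul, map_inv]
    rw [mul_right_comm]
    simp
  -- key divisibility step
  have key : ∀ m : ℕ, 0 < m →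
      ∃ b : A, b ^ m = Abelianization.of (⟨g * ↑n * g⁻¹, hN.conj_mem ↑n n.2 g⟩ : ↥N)
        * (Abelianization.of n)⁻¹ := by
    intro m hm
    set K : Subgroup A := (powMonoidHom m : A →* A).range with hK
    have hKmap : ∀ e : A ≃* A, K.map (e : A →* A) = K := by
      intro e
      apply le_antisymm
      · rintro x ⟨y, ⟨c, rfl⟩, rfl⟩
        exact ⟨e c, by simp [powMonoidHom_apply, map_pow]⟩
      · rintro x ⟨c, rfl⟩
        exact ⟨e.symm c ^ m, ⟨e.symm c, rfl⟩, by simp [powMonoidHom_apply, map_pow]⟩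
    set B := A ⧸ K with hB
    -- B is finite
    haveI : Group.FG B := inferInstance
    have htor : ∀ x : B, x ^ m = 1 := by
      intro x
      obtain ⟨a, rfl⟩ := QuotientGroup.mk'_surjective K x
      rw [← map_pow, ← MonoidHom.mem_ker, QuotientGroup.ker_mk']
      exact ⟨a, rfl⟩
    haveI : Finite B := CommGroup.finite_of_fg_torsion B
      (fun x => isOfFinOrder_iff_pow_eq_one.mpr ⟨m, hm, htor x⟩)
    -- descend θ to an action on B
    set θB : G →* MulAut B := MonoidHom.mk'
        (fun g => QuotientGroup.congr K K (θ g) (hKmap _))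
        (by
          intro g₁ g₂
          apply MulEquiv.toMonoidHom_injective
          apply QuotientGroup.monoidHom_ext
          ext a
          simp [QuotientGroup.congr_mk, map_mul]) with hθB
    have hθBN : ∀ x ∈ N, θB x = 1 := by
      intro x hx
      apply MulEquiv.toMonoidHom_injective
      apply QuotientGroup.monoidHom_ext
      ext a
      simp only [hθB, MonoidHom.mk'_apply, MulEquiv.coe_toMonoidHom,
        MonoidHom.comp_apply, hθN x hx, MulAut.one_apply]
      rfl
    -- shrink to universe 0 and use the hypothesis on Q
    haveI : Small.{0} (MulAut B) := Countable.toSmall _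
    set f0 : G →* Shrink.{0} (MulAut B) :=
      ((Shrink.mulEquiv (α := MulAut B)).symm.toMonoidHom).comp θB with hf0
    have hker : N ≤ f0.ker := by
      intro x hx
      simp [hf0, MonoidHom.mem_ker, hθBN x hx]
    set fQ : G ⧸ N →* Shrink.{0} (MulAut B) := QuotientGroup.lift N f0 hker with hfQ
    have h1 : fQ (QuotientGroup.mk g) = 1 := hQ _ fQ _
    have h2 : θB g = 1 := by
      have : (Shrink.mulEquiv (α := MulAut B)).symm (θB g) = 1 := h1
      simpa using (Shrink.mulEquiv (α := MulAut B)).symm.injective (by simpa using this)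
    -- so conjugation by g is trivial mod K
    have h3 : QuotientGroup.mk (s := K) (θ g (Abelianization.of n))
        = QuotientGroup.mk (s := K) (Abelianization.of n) := by
      have := congrArg (fun e : MulAut B => e (QuotientGroup.mk (s := K) (Abelianization.of n))) h2
      exact this
    rw [hθof] at h3
    have hmem : Abelianization.of ((MulAut.conjNormal (H := N) g) n)
        * (Abelianization.of n)⁻¹ ∈ K := by
      have h4 := QuotientGroup.eq.mp h3.symm
      rwa [mul_comm] at h4
    obtain ⟨b, hb⟩ := hmem
    refine ⟨b, ?_⟩
    have hval : (MulAut.conjNormal (H := N) g) n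
        = (⟨g * ↑n * g⁻¹, hN.conj_mem ↑n n.2 g⟩ : ↥N) := by ext; simp
    rw [← hval, ← hb]; rfl
  have := aux_divisible_eq_one _ key
  rw [← mul_inv_eq_one]
  exact this
end

section
/- Let 1 → N → G → Q → 1 be a short exact sequence of groups with N finitely generated, G perfect, H₂(Q,ℤ) = 0, and Q having no nontrivial finite quotients. Then N is perfect. -/
open scoped DirectSum
open scoped commutatorElement

/-- Triviality of H₂(Q, ℤ), expressed via Hopf's formula: for the canonical free
presentation 1 → R → F → Q → 1 with F the free group on the set Q and R the kernel of
the canonical surjection π : F → Q, Hopf's formula gives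
H₂(Q,ℤ) ≅ (R ∩ [F,F]) / [F,R]; triviality says R ∩ [F,F] ≤ [R,F]. -/
def H2Trivial (Q : Type*) [Group Q] : Prop :=
  (FreeGroup.lift (id : Q → Q)).ker ⊓ commutator (FreeGroup Q) ≤
    ⁅(FreeGroup.lift (id : Q → Q)).ker, (⊤ : Subgroup (FreeGroup Q))⁆



private lemma comm_central_right {H : Type*} [Group H] (a b w : H)
    (hw : ∀ x, w * x = x * w) : ⁅a, b * w⁆ = ⁅a, b⁆ := by
  simp only [commutatorElement_def, mul_inv_rev]
  have h1 : a * (b * w) * a⁻¹ = a * b * a⁻¹ * w := by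
    rw [← mul_assoc, mul_assoc (a * b) w a⁻¹, hw a⁻¹, ← mul_assoc]
  rw [h1, mul_assoc (a * b * a⁻¹) w, ← mul_assoc w, mul_inv_cancel, one_mul]

private lemma comm_central {H : Type*} [Group H] (a b z w : H)
    (hz : ∀ x, z * x = x * z) (hw : ∀ x, w * x = x * w) :
    ⁅a * z, b * w⁆ = ⁅a, b⁆ := by
  have h1 : ⁅a * z, b * w⁆ = ⁅b * w, a * z⁆⁻¹ := (commutatorElement_inv _ _).symm
  rw [h1, comm_central_right _ _ _ hz, commutatorElement_inv, comm_central_right _ _ _ hw]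

private lemma stepA {G : Type*} [Group G] (N : Subgroup G) [N.Normal]
    (hGperf : commutator G = ⊤) (hH2 : H2Trivial (G ⧸ N)) :
    N ≤ ⁅(⊤ : Subgroup G), N⁆ := by
  set C : Subgroup G := ⁅(⊤ : Subgroup G), N⁆ with hCdef
  let ψ : G →* G ⧸ C := QuotientGroup.mk' C
  -- image of N is central in G ⧸ C
  have hcent : ∀ n, n ∈ N → ∀ y : G ⧸ C, ψ n * y = y * ψ n := by
    intro n hn y
    obtain ⟨g, rfl⟩ := QuotientGroup.mk'_surjective C y
    have h1 : ⁅g, n⁆ ∈ C := Subgroup.commutator_mem_commutator (Subgroup.mem_top g) hn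
    have h2 : ψ ⁅g, n⁆ = 1 := (QuotientGroup.eq_one_iff _).mpr h1
    rw [map_commutatorElement] at h2
    exact ((commutatorElement_eq_one_iff_commute.mp h2).symm).eq
  -- free group setup
  let π : FreeGroup (G ⧸ N) →* G ⧸ N := FreeGroup.lift (id : G ⧸ N → G ⧸ N)
  let φ : FreeGroup (G ⧸ N) →* G := FreeGroup.lift (fun q : G ⧸ N => q.out)
  have hcomp : (QuotientGroup.mk' N).comp φ = π := by
    apply FreeGroup.ext_hom
    intro q
    simp [π, φ, QuotientGroup.out_eq']
  have hcomp' : ∀ x, QuotientGroup.mk (φ x) = π x := fun x => congrArg (· x) hcomp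
  -- the subgroup D
  let D : Subgroup G :=
    { carrier := {g | ∃ x : FreeGroup (G ⧸ N), x ∈ commutator (FreeGroup (G ⧸ N)) ∧
        π x = QuotientGroup.mk g ∧ ψ (φ x) = ψ g}
      one_mem' := ⟨1, one_mem _, by simp, by simp⟩
      mul_mem' := by
        rintro a b ⟨x, hx, hx1, hx2⟩ ⟨y, hy, hy1, hy2⟩
        exact ⟨x * y, mul_mem hx hy, by simp [map_mul, hx1, hy1], by simp [map_mul, hx2, hy2]⟩
      inv_mem' := by
        rintro a ⟨x, hx, hx1, hx2⟩
        exact ⟨x⁻¹, inv_mem hx, by simp [map_inv, hx1], by simp [map_inv, hx2]⟩ }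
  have hDtop : (⊤ : Subgroup G) ≤ D := by
    rw [← hGperf, commutator_def]
    rw [Subgroup.commutator_le]
    intro g _ h _
    refine ⟨⁅FreeGroup.of (QuotientGroup.mk g : G ⧸ N), FreeGroup.of (QuotientGroup.mk h : G ⧸ N)⁆, ?_, ?_, ?_⟩
    · rw [commutator_def]
      exact Subgroup.commutator_mem_commutator (Subgroup.mem_top _) (Subgroup.mem_top _)
    · rw [map_commutatorElement]
      simp only [π, FreeGroup.lift_apply_of, id_eq]
      exact (map_commutatorElement (QuotientGroup.mk' N) g h).symm
    · rw [map_commutatorElement, map_commutatorElement, map_commutatorElement]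
      simp only [φ, FreeGroup.lift_apply_of]
      -- ψ ((mk g).out) = ψ g * central, similarly for h
      have hg : (QuotientGroup.mk g : G ⧸ N).out = g * (g⁻¹ * (QuotientGroup.mk g : G ⧸ N).out) := by
        group
      have hgN : g⁻¹ * (QuotientGroup.mk g : G ⧸ N).out ∈ N := by
        rw [← QuotientGroup.eq]
        exact (QuotientGroup.out_eq' _).symm
      have hh : (QuotientGroup.mk h : G ⧸ N).out = h * (h⁻¹ * (QuotientGroup.mk h : G ⧸ N).out) := by
        group
      have hhN : h⁻¹ * (QuotientGroup.mk h : G ⧸ N).out ∈ N := by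
        rw [← QuotientGroup.eq]
        exact (QuotientGroup.out_eq' _).symm
      rw [hg, hh, map_mul ψ g (g⁻¹ * (QuotientGroup.mk g : G ⧸ N).out),
        map_mul ψ h (h⁻¹ * (QuotientGroup.mk h : G ⧸ N).out)]
      exact comm_central (ψ g) (ψ h) _ _ (hcent _ hgN) (hcent _ hhN)
  -- conclude
  intro n hn
  obtain ⟨x, hx, hx1, hx2⟩ := hDtop (Subgroup.mem_top n)
  have hxker : x ∈ (FreeGroup.lift (id : (G ⧸ N) → (G ⧸ N))).ker := by
    rw [MonoidHom.mem_ker]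
    rw [hx1]
    exact (QuotientGroup.eq_one_iff n).mpr hn
  have hxmem : x ∈ ⁅(FreeGroup.lift (id : (G ⧸ N) → (G ⧸ N))).ker, (⊤ : Subgroup (FreeGroup (G ⧸ N)))⁆ :=
    hH2 ⟨hxker, hx⟩
  have hφx : φ x ∈ C := by
    have h1 : φ x ∈ Subgroup.map φ ⁅(FreeGroup.lift (id : (G ⧸ N) → (G ⧸ N))).ker, (⊤ : Subgroup (FreeGroup (G ⧸ N)))⁆ :=
      ⟨x, hxmem, rfl⟩
    rw [Subgroup.map_commutator] at h1
    have h2 : Subgroup.map φ (FreeGroup.lift (id : (G ⧸ N) → (G ⧸ N))).ker ≤ N := by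
      rintro _ ⟨r, hr, rfl⟩
      rw [← QuotientGroup.eq_one_iff]
      rw [hcomp' r]
      exact hr
    have h3 : ⁅Subgroup.map φ (FreeGroup.lift (id : (G ⧸ N) → (G ⧸ N))).ker, Subgroup.map φ ⊤⁆ ≤ ⁅N, (⊤ : Subgroup G)⁆ :=
      Subgroup.commutator_mono h2 le_top
    have h4 : ⁅N, (⊤ : Subgroup G)⁆ = C := Subgroup.commutator_comm _ _
    exact h4 ▸ h3 h1
  have : ψ n = 1 := by rw [← hx2]; exact (QuotientGroup.eq_one_iff _).mpr hφx
  exact (QuotientGroup.eq_one_iff _).mp this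


private lemma exists_pow_not_eq {A : Type*} [CommGroup A] [Group.FG A] (b : A) (hb : b ≠ 1) :
    ∃ m : ℕ, 0 < m ∧ ∀ x : A, x ^ m ≠ b := by
  obtain ⟨n, ι, fι, p, hp, e, ⟨f⟩⟩ := AddCommGroup.equiv_free_prod_directSum_zmod (Additive A)
  haveI : ∀ i, NeZero (p i ^ e i) := fun i => ⟨pow_ne_zero _ (hp i).ne_zero⟩
  haveI : Finite (⨁ i : ι, ZMod (p i ^ e i)) :=
    Finite.of_equiv _ DFinsupp.equivFunOnFintype.symm
  set y := f (Additive.ofMul b) with hy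
  have hy0 : y ≠ 0 := by
    simp only [hy, ne_eq, map_eq_zero_iff f f.injective]
    exact fun h => hb (by simpa using congrArg Additive.toMul h)
  have key : ∀ m : ℕ, ∀ x : A, x ^ m = b → m • f (Additive.ofMul x) = y := by
    intro m x hx
    rw [hy, ← hx, ← map_nsmul]
    congr 1
  by_cases h1 : y.1 = 0
  · -- torsion case
    have h2 : y.2 ≠ 0 := fun h => hy0 (Prod.ext h1 h)
    refine ⟨Nat.card (⨁ i : ι, ZMod (p i ^ e i)), Nat.card_pos, fun x hx => ?_⟩
    have hk := key _ x hx
    have h3 : y.2 = Nat.card (⨁ i : ι, ZMod (p i ^ e i)) • (f (Additive.ofMul x)).2 := by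
      rw [← hk]
      exact (map_nsmul (AddMonoidHom.snd (Fin n →₀ ℤ) (⨁ i : ι, ZMod (p i ^ e i))) _ _)
    rw [card_nsmul_eq_zero'] at h3
    exact h2 h3
  · -- free case
    obtain ⟨i, hi⟩ : ∃ i, y.1 i ≠ 0 := by
      by_contra h
      push_neg at h
      exact h1 (Finsupp.ext h)
    set m : ℕ := (y.1 i).natAbs + 1 with hm
    refine ⟨m, Nat.succ_pos _, fun x hx => ?_⟩
    have hk := key m x hx
    have h3 : y.1 i = (m : ℤ) * ((f (Additive.ofMul x)).1 i) := by
      rw [← hk]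
      have h := map_nsmul ((Finsupp.applyAddHom i).comp
        (AddMonoidHom.fst (Fin n →₀ ℤ) (⨁ i : ι, ZMod (p i ^ e i)))) m (f (Additive.ofMul x))
      simpa [nsmul_eq_mul] using h
    have h4 : (m : ℤ) ∣ y.1 i := ⟨_, h3⟩
    have h5 := Nat.le_of_dvd (Int.natAbs_pos.mpr hi) (by simpa using Int.natAbs_dvd_natAbs.mpr h4)
    omega


private structure Wrap (n : ℕ) : Type where
  val : Fin n

private def wrapEquiv (n : ℕ) : Wrap n ≃ Fin n :=
  ⟨Wrap.val, Wrap.mk, fun _ => rfl, fun _ => rfl⟩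

section RhoAux
variable {G : Type*} [Group G] (N : Subgroup G) [N.Normal]

private def rhoAux (g : G) : Abelianization ↥N →* Abelianization ↥N :=
  Abelianization.map (MulAut.conjNormal g).toMonoidHom

private lemma rhoAux_of (g : G) (x : ↥N) :
    rhoAux N g (Abelianization.of x) = Abelianization.of (MulAut.conjNormal g x) :=
  Abelianization.map_of _ _

omit [N.Normal] in
private lemma ab_surj : Function.Surjective (Abelianization.of : ↥N → Abelianization ↥N) :=
  fun a => Quot.exists_rep a

private lemma rhoAux_comp (g h : G) :
    (rhoAux N g).comp (rhoAux N h) = rhoAux N (g * h) := by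
  apply Abelianization.hom_ext
  apply MonoidHom.ext
  intro x
  simp only [MonoidHom.comp_apply, rhoAux_of, map_mul]
  rfl

private lemma rhoAux_one : rhoAux N 1 = MonoidHom.id _ := by
  apply Abelianization.hom_ext
  apply MonoidHom.ext
  intro x
  simp [rhoAux_of]

private lemma rhoAux_inv_cancel (g : G) (a : Abelianization ↥N) :
    rhoAux N g⁻¹ (rhoAux N g a) = a := by
  have h1 : (rhoAux N g⁻¹).comp (rhoAux N g) = MonoidHom.id _ := by
    rw [rhoAux_comp, inv_mul_cancel, rhoAux_one]
  exact congrArg (· a) h1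

end RhoAux


private lemma stepB {G : Type*} [Group G] (N : Subgroup G) [N.Normal]
    (hfg : Group.FG ↥N)
    (hQ : ∀ (H : Type) [Group H] [Finite H] (f : G ⧸ N →* H) (x : G ⧸ N), f x = 1) :
    ⁅(⊤ : Subgroup G), N⁆ ≤ Subgroup.map N.subtype (commutator ↥N) := by
  haveI := hfg
  haveI : Group.FG (Abelianization ↥N) := Group.fg_of_surjective (ab_surj N)
  rw [Subgroup.commutator_le]
  intro g _ n hn
  set x : ↥N := ⟨n, hn⟩ with hx
  -- Key: the conjugation action of g on the abelianization is trivial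
  have key : rhoAux N g (Abelianization.of x) = Abelianization.of x := by
    by_contra hne
    set b : Abelianization ↥N := rhoAux N g (Abelianization.of x) * (Abelianization.of x)⁻¹
      with hb
    have hb1 : b ≠ 1 := by
      intro h
      exact hne (by rwa [hb, mul_inv_eq_one] at h)
    obtain ⟨m, hm, hmb⟩ := exists_pow_not_eq b hb1
    set P : Subgroup (Abelianization ↥N) := (powMonoidHom m).range with hP
    have hPmem : ∀ a : Abelianization ↥N, a ^ m ∈ P := fun a => ⟨a, rfl⟩
    have hPmap : ∀ (g' : G) (a : Abelianization ↥N), a ∈ P → rhoAux N g' a ∈ P := by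
      rintro g' _ ⟨c, rfl⟩
      exact ⟨rhoAux N g' c, (map_pow _ _ _).symm⟩
    -- descend to the quotient
    set B := Abelianization ↥N ⧸ P with hB
    have hmkP : ∀ a : Abelianization ↥N, a ∈ P →
        (QuotientGroup.mk a : B) = 1 := fun a ha => (QuotientGroup.eq_one_iff _).mpr ha
    let saux : G → (B →* B) := fun g' =>
      QuotientGroup.lift P ((QuotientGroup.mk' P).comp (rhoAux N g'))
        (fun a ha => (QuotientGroup.eq_one_iff _).mpr (hPmap g' a ha))
    have saux_mk : ∀ (g' : G) (a : Abelianization ↥N),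
        saux g' (QuotientGroup.mk a) = QuotientGroup.mk (rhoAux N g' a) := fun _ _ => rfl
    have saux_comp : ∀ (g' h' : G) (q : B), saux g' (saux h' q) = saux (g' * h') q := by
      intro g' h' q
      obtain ⟨a, rfl⟩ := QuotientGroup.mk_surjective q
      rw [saux_mk, saux_mk, saux_mk, ← rhoAux_comp]
      rfl
    have saux_one : ∀ q : B, saux 1 q = q := by
      intro q
      obtain ⟨a, rfl⟩ := QuotientGroup.mk_surjective q
      rw [saux_mk, rhoAux_one]
      rfl
    let σ : G →* MulAut B :=
      { toFun := fun g' =>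
          { toFun := saux g'
            invFun := saux g'⁻¹
            left_inv := fun q => by rw [saux_comp, inv_mul_cancel, saux_one]
            right_inv := fun q => by rw [saux_comp, mul_inv_cancel, saux_one]
            map_mul' := map_mul _ }
        map_one' := by
          apply MulEquiv.ext
          intro q
          exact saux_one q
        map_mul' := by
          intro g' h'
          apply MulEquiv.ext
          intro q
          exact (saux_comp g' h' q).symm }
    have σ_apply : ∀ (g' : G) (q : B), σ g' q = saux g' q := fun _ _ => rfl
    -- B is finite
    haveI : Finite B := by
      apply CommGroup.finite_of_fg_torsion
      intro q
      obtain ⟨a, rfl⟩ := QuotientGroup.mk_surjective q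
      refine isOfFinOrder_iff_pow_eq_one.mpr ⟨m, hm, ?_⟩
      rw [← QuotientGroup.mk_pow]
      exact hmkP _ (hPmem a)
    haveI : Finite (MulAut B) :=
      Finite.of_injective MulEquiv.toEquiv MulEquiv.toEquiv_injective
    -- σ kills N
    have hσN : ∀ n' ∈ N, σ n' = 1 := by
      intro n' hn'
      apply MulEquiv.ext
      intro q
      obtain ⟨a, rfl⟩ := QuotientGroup.mk_surjective q
      obtain ⟨z, rfl⟩ := ab_surj N a
      rw [σ_apply, saux_mk, rhoAux_of]
      have hc : (MulAut.conjNormal n' : MulAut ↥N) z = (⟨n', hn'⟩ : ↥N) * z * (⟨n', hn'⟩ : ↥N)⁻¹ := by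
        apply Subtype.ext
        push_cast
        rw [MulAut.conjNormal_apply]
      rw [hc]
      have : Abelianization.of ((⟨n', hn'⟩ : ↥N) * z * (⟨n', hn'⟩ : ↥N)⁻¹) = Abelianization.of z := by
        rw [map_mul, map_mul, map_inv, mul_comm, ← mul_assoc, inv_mul_cancel, one_mul]
      rw [this]
      rfl
    -- descend to the quotient G ⧸ N and use hQ
    let τ : G ⧸ N →* MulAut B := QuotientGroup.lift N σ hσN
    obtain ⟨k, ⟨eqv⟩⟩ := Finite.exists_equiv_fin (MulAut B)
    let e : Wrap k ≃ MulAut B := (wrapEquiv k).trans eqv.symm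
    letI : Group (Wrap k) := e.group
    haveI : Finite (Wrap k) := Finite.of_equiv _ e.symm
    let me : Wrap k ≃* MulAut B := e.mulEquiv
    let f : G ⧸ N →* Wrap k := me.symm.toMonoidHom.comp τ
    have hf := hQ (Wrap k) f (QuotientGroup.mk g)
    have hτ : τ (QuotientGroup.mk g) = 1 := by
      have h1 : me.symm (τ (QuotientGroup.mk g)) = 1 := hf
      have h2 : me.symm (1 : MulAut B) = 1 := map_one _
      exact me.symm.injective (h1.trans h2.symm)
    have hσg : σ g = 1 := by
      have : τ (QuotientGroup.mk g) = σ g := QuotientGroup.lift_mk' N hσN g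
      rwa [this] at hτ
    -- contradiction
    have h3 : saux g (QuotientGroup.mk (Abelianization.of x)) = QuotientGroup.mk (Abelianization.of x) := by
      rw [← σ_apply, hσg]
      rfl
    rw [saux_mk] at h3
    have h4 : b ∈ P := by
      have h5 : ((QuotientGroup.mk (rhoAux N g (Abelianization.of x)) : B) =
          QuotientGroup.mk (Abelianization.of x)) := h3
      rw [QuotientGroup.eq] at h5
      have : b = ((rhoAux N g (Abelianization.of x))⁻¹ * Abelianization.of x)⁻¹ := by
        rw [hb, mul_inv_rev, inv_inv, mul_comm]
      rw [this]
      exact P.inv_mem h5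
    obtain ⟨c, hc⟩ := h4
    exact hmb c hc
  -- translate key into commutator membership
  rw [rhoAux_of] at key
  have h6 : ((MulAut.conjNormal g : MulAut ↥N) x)⁻¹ * x ∈ commutator ↥N := by
    rw [← QuotientGroup.eq]
    exact key
  have h7 : (MulAut.conjNormal g : MulAut ↥N) x * x⁻¹ ∈ commutator ↥N := by
    have h8 := (commutator ↥N).inv_mem h6
    simp only [mul_inv_rev, inv_inv] at h8
    -- h8 : x⁻¹ * conj ∈ commutator; conjugate by x
    have h9 := Subgroup.Normal.conj_mem inferInstance _ h8 x
    have h10 : x * (x⁻¹ * (MulAut.conjNormal g : MulAut ↥N) x) * x⁻¹ =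
        (MulAut.conjNormal g : MulAut ↥N) x * x⁻¹ := by group
    rwa [h10] at h9
  refine ⟨(MulAut.conjNormal g : MulAut ↥N) x * x⁻¹, h7, ?_⟩
  simp only [Subgroup.coe_subtype, Subgroup.coe_mul, Subgroup.coe_inv]
  rw [MulAut.conjNormal_apply]
  simp [commutatorElement_def, hx]


/-- if 1 → N → G → Q → 1 is exact with N finitely generated, G perfect,
H₂(Q,ℤ) = 0 and Q having no nontrivial finite quotients, then N is perfect. -/
theorem kernel_perfect
    (G : Type*) [Group G] (N : Subgroup G) [N.Normal]
    (hfg : Group.FG ↥N)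
    (hGperf : commutator G = ⊤)
    (hH2 : H2Trivial (G ⧸ N))
    (hQ : ∀ (H : Type) [Group H] [Finite H] (f : G ⧸ N →* H) (x : G ⧸ N), f x = 1) :
    commutator ↥N = ⊤ := by
  have hA := stepA N hGperf hH2
  have hB := stepB N hfg hQ
  have h1 : N ≤ Subgroup.map N.subtype (commutator ↥N) := hA.trans hB
  have h2 : Subgroup.map N.subtype (commutator ↥N) ≤ N := by
    rintro _ ⟨y, _, rfl⟩
    exact y.2
  have hmaptop : Subgroup.map N.subtype ⊤ = N := by
    rw [← MonoidHom.range_eq_map, N.range_subtype]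
  have h3 : Subgroup.map N.subtype (commutator ↥N) = Subgroup.map N.subtype ⊤ := by
    rw [hmaptop]
    exact le_antisymm h2 h1
  exact Subgroup.map_injective N.subtype_injective h3
end

section
/- Let p₁ : G₁ → Q and p₂ : G₂ → Q be surjective group homomorphisms with G₁, G₂ finitely generated and Q finitely presented. Then the fibre product P = {(g₁,g₂) ∈ G₁ × G₂ : p₁(g₁) = p₂(g₂)} is finitely generated. -/
/-- A group is finitely presented if it is isomorphic to a `PresentedGroup` on finitely
many generators with finitely many relations. -/
def FinitelyPresented (Q : Type*) [Group Q] : Prop :=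
  ∃ (n : ℕ) (rels : Set (FreeGroup (Fin n))),
    rels.Finite ∧ Nonempty (PresentedGroup rels ≃* Q)

/-- The fibre product of two homomorphisms p₁ : G₁ → Q and p₂ : G₂ → Q, as a subgroup
of G₁ × G₂. -/
def fiberProd {G₁ G₂ Q : Type*} [Group G₁] [Group G₂] [Group Q]
    (p₁ : G₁ →* Q) (p₂ : G₂ →* Q) : Subgroup (G₁ × G₂) where
  carrier := { x | p₁ x.1 = p₂ x.2 }
  one_mem' := by simp
  mul_mem' := by
    intro a b ha hb
    simp only [Set.mem_setOf_eq, Prod.fst_mul, Prod.snd_mul, map_mul] at *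
    rw [ha, hb]
  inv_mem' := by
    intro a ha
    simp only [Set.mem_setOf_eq, Prod.fst_inv, Prod.snd_inv, map_inv] at *
    rw [ha]

/-!
Lift finite generating sets of `G₁` and `G₂` into the fibre product `P` and add `(1, s)` for a
finite set `S` normally generating `ker p₂`. Such an `S` exists because `Q` is finitely presented:
if `F` lifts the generators of `Q` to `G₂`, the images under `F` of the relators of `Q`, together
with `x · F(w)⁻¹` for each generator `x` of `G₂` and a word `w` with the same image in `Q`, normally
generate `ker p₂`. The subgroup `H` generated by all these elements projects onto both factors, so
`{x | (1, x) ∈ H}` is normal in `G₂` and therefore contains `ker p₂`. Any `(g₁, g₂) ∈ P` is then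
`(1, g₂ y⁻¹) · (g₁, y)` for some `(g₁, y) ∈ H`.
-/

open Function Subgroup

theorem FinitelyPresented.isFinitelyPresented {Q : Type*} [Group Q] (hQ : FinitelyPresented Q) :
    Group.IsFinitelyPresented Q := by
  obtain ⟨n, rels, hrels, ⟨e⟩⟩ := hQ
  have := hrels.to_subtype
  exact .equiv e

namespace MonoidHom

variable {G Q : Type*} [Group G] [Group Q]

theorem isFinitelyNormallyGenerated_ker [Group.FG G] [Group.IsFinitelyPresented Q]
    (p : G →* Q) (hp : Surjective p) : p.ker.IsFinitelyNormallyGenerated := by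
  obtain ⟨n, φ, hφ, R, hR, hφker⟩ := ‹Group.IsFinitelyPresented Q›
  obtain ⟨X, hX, hXfin⟩ := Group.fg_iff.mp ‹Group.FG G›
  let F : FreeGroup (Fin n) →* G := FreeGroup.lift (surjInv hp ∘ φ ∘ FreeGroup.of)
  have hpF (v : FreeGroup (Fin n)) : p (F v) = φ v := by
    rw [← comp_apply]
    congr 1
    ext j
    simp [F, surjInv_eq hp]
  let w := surjInv hφ ∘ p
  have hw (x : G) : φ (w x) = p x := surjInv_eq hφ _
  let S := F '' R ∪ (fun x => x * (F (w x))⁻¹) '' X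
  have hSker : S ⊆ p.ker := by
    rintro _ (⟨r, hr, rfl⟩ | ⟨x, -, rfl⟩)
    · rw [SetLike.mem_coe, mem_ker, hpF, ← mem_ker, ← hφker]
      exact subset_normalClosure hr
    · simp [hpF, hw]
  refine ⟨S, (hR.image _).union (hXfin.image _), le_antisymm (normalClosure_le_normal hSker) ?_⟩
  set M := normalClosure S
  have hFM : F.range ⊔ M = ⊤ := by
    rw [eq_top_iff, ← hX, closure_le]
    intro x hx
    have hxM : x * (F (w x))⁻¹ ∈ M := subset_normalClosure (Or.inr ⟨x, hx, rfl⟩)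
    have hFx : F (w x) ∈ F.range ⊔ M := mem_sup_left ⟨w x, rfl⟩
    simpa using mul_mem (mem_sup_right hxM) hFx
  intro g hg
  obtain ⟨_, ⟨v, rfl⟩, m, hm, rfl⟩ := mem_sup_of_normal_right.mp (hFM ▸ mem_top g)
  have hpm : p m = 1 := normalClosure_le_normal hSker hm
  have hv : v ∈ normalClosure R := by
    rw [hφker, mem_ker, ← hpF]
    simpa [hpm] using hg
  have hFv : F v ∈ normalClosure (F '' R) := map_normalClosure_le R F ⟨v, hv, rfl⟩
  exact mul_mem (normalClosure_mono Set.subset_union_left hFv) hm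

end MonoidHom

section FiberProd

variable {G₁ G₂ Q : Type*} [Group G₁] [Group G₂] [Group Q]

theorem Subgroup.normal_comap_inr_of_map_snd_eq_top {H : Subgroup (G₁ × G₂)}
    (hsnd : H.map (MonoidHom.snd G₁ G₂) = ⊤) : (H.comap (MonoidHom.inr G₁ G₂)).Normal := by
  refine ⟨fun x hx g => ?_⟩
  obtain ⟨⟨h, g⟩, hH, rfl⟩ := hsnd ▸ mem_top g
  have : ((h, g) * (1, x) * (h, g)⁻¹ : G₁ × G₂) ∈ H := mul_mem (mul_mem hH hx) (inv_mem hH)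
  simpa using this

theorem fiberProd_le_of_map_fst_eq_top {p₁ : G₁ →* Q} {p₂ : G₂ →* Q} {H : Subgroup (G₁ × G₂)}
    (hHP : H ≤ fiberProd p₁ p₂) (hfst : H.map (MonoidHom.fst G₁ G₂) = ⊤)
    (hker : p₂.ker ≤ H.comap (MonoidHom.inr G₁ G₂)) : fiberProd p₁ p₂ ≤ H := by
  rintro ⟨g₁, g₂⟩ (hg : p₁ g₁ = p₂ g₂)
  obtain ⟨⟨g₁, y⟩, hy, rfl⟩ := hfst ▸ mem_top g₁
  have hy' : p₁ g₁ = p₂ y := hHP hy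
  have hker' : g₂ * y⁻¹ ∈ p₂.ker := by simp [MonoidHom.mem_ker, ← hg, hy']
  have := mul_mem (mem_comap.mp (hker hker')) hy
  simpa using this

end FiberProd

/-- the fibre product of surjections p₁ : G₁ → Q, p₂ : G₂ → Q with G₁, G₂
finitely generated and Q finitely presented is finitely generated. -/
theorem fiber_product_fg
    (G₁ G₂ Q : Type*) [Group G₁] [Group G₂] [Group Q]
    (h₁ : Group.FG G₁) (h₂ : Group.FG G₂) (hQ : FinitelyPresented Q)
    (p₁ : G₁ →* Q) (p₂ : G₂ →* Q)
    (hp₁ : Function.Surjective p₁) (hp₂ : Function.Surjective p₂) :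
    Group.FG ↥(fiberProd p₁ p₂) := by
  have := hQ.isFinitelyPresented
  obtain ⟨S, hSfin, hS⟩ := p₂.isFinitelyNormallyGenerated_ker hp₂
  obtain ⟨A, hA, hAfin⟩ := Group.fg_iff.mp h₁
  obtain ⟨B, hB, hBfin⟩ := Group.fg_iff.mp h₂
  let T : Set (G₁ × G₂) := (fun a => (a, surjInv hp₂ (p₁ a))) '' A ∪
    (fun b => (surjInv hp₁ (p₂ b), b)) '' B ∪ MonoidHom.inr G₁ G₂ '' S
  have hTP : closure T ≤ fiberProd p₁ p₂ := by
    rw [closure_le]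
    rintro _ ((⟨a, -, rfl⟩ | ⟨b, -, rfl⟩) | ⟨s, hs, rfl⟩)
    · exact (surjInv_eq hp₂ _).symm
    · exact surjInv_eq hp₁ _
    · have hs' : s ∈ p₂.ker := hS ▸ subset_normalClosure hs
      exact (map_one p₁).trans (MonoidHom.mem_ker.mp hs').symm
  have hfst : (closure T).map (MonoidHom.fst G₁ G₂) = ⊤ := by
    rw [eq_top_iff, ← hA, MonoidHom.map_closure]
    exact closure_mono fun a ha => ⟨_, .inl (.inl ⟨a, ha, rfl⟩), rfl⟩
  have hsnd : (closure T).map (MonoidHom.snd G₁ G₂) = ⊤ := by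
    rw [eq_top_iff, ← hB, MonoidHom.map_closure]
    exact closure_mono fun b hb => ⟨_, .inl (.inr ⟨b, hb, rfl⟩), rfl⟩
  have := normal_comap_inr_of_map_snd_eq_top hsnd
  have hker : p₂.ker ≤ (closure T).comap (MonoidHom.inr G₁ G₂) :=
    hS ▸ normalClosure_le_normal fun s hs => subset_closure (.inr ⟨s, hs, rfl⟩)
  rw [Group.fg_iff_subgroup_fg, fg_iff]
  exact ⟨T, le_antisymm hTP (fiberProd_le_of_map_fst_eq_top hTP hfst hker),
    ((hAfin.image _).union (hBfin.image _)).union (hSfin.image _)⟩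
end

section
/- For i = 1, …, d let pᵢ : Gᵢ → Q be surjective group homomorphisms with each Gᵢ finitely generated and Q finitely presented. Then the fibre product P_d = {(g₁,…,g_d) ∈ G₁ × ⋯ × G_d : pᵢ(gᵢ) = pⱼ(gⱼ) for all i,j} is finitely generated. -/
/-- The fibre product of a family of homomorphisms pᵢ : Gᵢ → Q, as the subgroup of
∏ᵢ Gᵢ of tuples whose coordinates all have the same image in Q. -/
def fiberProdPi {ι : Type*} {G : ι → Type*} [∀ i, Group (G i)] {Q : Type*} [Group Q]
    (p : ∀ i, G i →* Q) : Subgroup (∀ i, G i) where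
  carrier := { x | ∀ i j, p i (x i) = p j (x j) }
  one_mem' := by intro i j; simp
  mul_mem' := by
    intro a b ha hb i j
    simp only [Pi.mul_apply, map_mul]
    rw [ha i j, hb i j]
  inv_mem' := by
    intro a ha i j
    simp only [Pi.inv_apply, map_inv]
    rw [ha i j]

/-- Core Tietze-type lemma: a surjection from a free group on a finite type onto a
finitely presented group has normally finitely generated kernel. -/
theorem freeGroup_ker_normally_fg {β : Type*} [Finite β] {n : ℕ}
    (rels : Set (FreeGroup (Fin n))) (hrels : rels.Finite)
    (φ : FreeGroup β →* PresentedGroup rels) (hφ : Function.Surjective φ) :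
    ∃ T : Set (FreeGroup β), T.Finite ∧ Subgroup.normalClosure T = φ.ker := by
  classical
  have hmk := PresentedGroup.mk_surjective rels
  choose w hw using fun b : β => hmk (φ (FreeGroup.of b))
  choose v hv using fun j : Fin n => hφ (PresentedGroup.mk rels (FreeGroup.of j))
  set Φ : FreeGroup β →* FreeGroup (Fin n) := FreeGroup.lift w with hΦdef
  set Ψ : FreeGroup (Fin n) →* FreeGroup β := FreeGroup.lift v with hΨdef
  have hΦ : ∀ x, PresentedGroup.mk rels (Φ x) = φ x := by
    have : (PresentedGroup.mk rels).comp Φ = φ :=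
      FreeGroup.ext_hom _ _ (fun a => by simp [hΦdef, hw])
    intro x; exact DFunLike.congr_fun this x
  have hΨ : ∀ y, φ (Ψ y) = PresentedGroup.mk rels y := by
    have : φ.comp Ψ = PresentedGroup.mk rels :=
      FreeGroup.ext_hom _ _ (fun a => by simp [hΨdef, hv])
    intro y; exact DFunLike.congr_fun this y
  have ker_mk : ∀ y : FreeGroup (Fin n),
      PresentedGroup.mk rels y = 1 ↔ y ∈ Subgroup.normalClosure rels :=
    fun y => QuotientGroup.eq_one_iff y
  set T : Set (FreeGroup β) :=
    Ψ '' rels ∪ Set.range (fun b : β => (FreeGroup.of b)⁻¹ * Ψ (Φ (FreeGroup.of b))) with hTdef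
  refine ⟨T, (hrels.image Ψ).union (Set.finite_range _), ?_⟩
  set N := Subgroup.normalClosure T with hNdef
  have hN : N.Normal := Subgroup.normalClosure_normal
  apply le_antisymm
  · apply Subgroup.normalClosure_le_normal
    rintro x (⟨r, hr, rfl⟩ | ⟨b, rfl⟩)
    · simp only [MonoidHom.mem_ker, SetLike.mem_coe]
      rw [hΨ, ker_mk]
      exact Subgroup.subset_normalClosure hr
    · simp only [MonoidHom.mem_ker, SetLike.mem_coe, map_mul, map_inv, hΨ, hΦ]
      group
  · have key : ∀ x : FreeGroup β, x⁻¹ * Ψ (Φ x) ∈ N := by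
      intro x
      induction x using FreeGroup.induction_on with
      | C1 => simpa using N.one_mem
      | of b =>
          exact Subgroup.subset_normalClosure (Or.inr ⟨b, rfl⟩)
      | inv_of b hb =>
          show ((FreeGroup.of b)⁻¹)⁻¹ * Ψ (Φ ((FreeGroup.of b)⁻¹)) ∈ N
          have heq : ((FreeGroup.of b)⁻¹)⁻¹ * Ψ (Φ ((FreeGroup.of b)⁻¹)) =
              (FreeGroup.of b) * ((FreeGroup.of b)⁻¹ * Ψ (Φ (FreeGroup.of b)))⁻¹ *
                (FreeGroup.of b)⁻¹ := by
            simp only [map_inv]; group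
          rw [heq]
          exact hN.conj_mem _ (N.inv_mem hb) _
      | mul x y hx hy =>
          have heq : (x * y)⁻¹ * Ψ (Φ (x * y)) =
              (y⁻¹ * (x⁻¹ * Ψ (Φ x)) * y⁻¹⁻¹) * (y⁻¹ * Ψ (Φ y)) := by
            simp only [map_mul]; group
          rw [heq]
          exact N.mul_mem (hN.conj_mem _ hx y⁻¹) hy
    intro x hx
    have h1 : Φ x ∈ Subgroup.normalClosure rels := by
      rw [← ker_mk, hΦ]; exact hx
    have hle : Subgroup.normalClosure rels ≤ (Subgroup.normalClosure (Ψ '' rels)).comap Ψ :=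
      Subgroup.normalClosure_le_normal
        (fun r hr => Subgroup.subset_normalClosure ⟨r, hr, rfl⟩)
    have h2 : Ψ (Φ x) ∈ N :=
      Subgroup.normalClosure_mono Set.subset_union_left (hle h1)
    have h3 := N.mul_mem h2 (N.inv_mem (key x))
    simpa [← mul_assoc] using h3

/-- The kernel of a surjection from a finitely generated group onto a finitely
presented group is normally finitely generated. -/
theorem exists_finite_normalClosure_eq_ker {G : Type*} [Group G] {Q : Type*} [Group Q]
    (hG : Group.FG G) (hQ : FinitelyPresented Q) (q : G →* Q)
    (hq : Function.Surjective q) :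
    ∃ T : Set G, T.Finite ∧ Subgroup.normalClosure T = q.ker := by
  classical
  obtain ⟨n, rels, hrels, ⟨e⟩⟩ := hQ
  set q' : G →* PresentedGroup rels := (e.symm : Q →* PresentedGroup rels).comp q with hq'def
  have hq' : Function.Surjective q' := e.symm.surjective.comp hq
  have hkerq' : q'.ker = q.ker := by
    ext x
    simp [hq'def, MonoidHom.mem_ker, map_eq_one_iff _ e.symm.injective]
  obtain ⟨S, hScl, hSfin⟩ := Group.fg_iff.mp hG
  haveI : Finite ↥S := hSfin.to_subtype
  set π : FreeGroup ↥S →* G := FreeGroup.lift (Subtype.val : S → G) with hπdef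
  have hπ : Function.Surjective π := by
    rw [← MonoidHom.range_eq_top, hπdef, FreeGroup.range_lift_eq_closure,
      Subtype.range_coe, hScl]
  obtain ⟨T₀, hT₀fin, hT₀cl⟩ :=
    freeGroup_ker_normally_fg rels hrels (q'.comp π) (hq'.comp hπ)
  refine ⟨π '' T₀, hT₀fin.image π, ?_⟩
  rw [← Subgroup.map_normalClosure T₀ π hπ, hT₀cl, ← hkerq']
  apply le_antisymm
  · rintro x ⟨y, hy, rfl⟩
    simpa [MonoidHom.mem_ker] using hy
  · intro x hx
    obtain ⟨y, rfl⟩ := hπ x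
    exact ⟨y, by simpa [MonoidHom.mem_ker] using hx, rfl⟩

/-- for surjections pᵢ : Gᵢ → Q, i = 1, …, d, with each Gᵢ finitely
generated and Q finitely presented, the fibre product P_d ≤ G₁ × ⋯ × G_d is finitely
generated. -/
theorem fiber_product_pi_fg
    (d : ℕ) (G : Fin d → Type*) [∀ i, Group (G i)] (Q : Type*) [Group Q]
    (hG : ∀ i, Group.FG (G i)) (hQ : FinitelyPresented Q)
    (p : ∀ i, G i →* Q) (hp : ∀ i, Function.Surjective (p i)) :
    Group.FG ↥(fiberProdPi p) := by
  classical
  rcases Nat.eq_zero_or_pos d with rfl | hd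
  · haveI : Subsingleton (∀ i : Fin 0, G i) := ⟨fun a b => funext fun i => i.elim0⟩
    haveI : Subsingleton ↥(fiberProdPi p) := ⟨fun a b => Subtype.ext (Subsingleton.elim _ _)⟩
    haveI : Finite ↥(fiberProdPi p) := Finite.of_subsingleton
    infer_instance
  · rw [Group.fg_iff_subgroup_fg, Subgroup.fg_iff]
    choose sec hsec using fun i => hp i
    -- the lifts
    set L : (i : Fin d) → G i → (∀ j, G j) := fun i x =>
      Function.update (fun j => sec j (p i x)) i x with hLdef
    have hLval : ∀ i x j, p j (L i x j) = p i x := by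
      intro i x j
      by_cases h : j = i
      · subst h; simp [hLdef]
      · rw [hLdef]; simp only; rw [Function.update_of_ne h]; exact hsec j _
    have hLmem : ∀ i x, L i x ∈ fiberProdPi p := by
      intro i x j k; rw [hLval, hLval]
    have hLi : ∀ i x, L i x i = x := by
      intro i x; rw [hLdef]; simp
    choose S hScl hSfin using fun i => Group.fg_iff.mp (hG i)
    choose T hTfin hTcl using fun i =>
      exists_finite_normalClosure_eq_ker (hG i) hQ (p i) (hp i)
    set Sgen : Set (∀ j, G j) :=
      (⋃ i, L i '' S i) ∪ (⋃ i, Pi.mulSingle i '' T i) with hSgendef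
    have hSgenfin : Sgen.Finite := by
      apply Set.Finite.union <;>
        exact Set.finite_iUnion (fun i => Set.Finite.image _ (by first | exact hSfin i | exact hTfin i))
    have hTker : ∀ i, ∀ t ∈ T i, t ∈ (p i).ker := by
      intro i t ht
      rw [← hTcl i]; exact Subgroup.subset_normalClosure ht
    have hsingleval : ∀ (i : Fin d) (t : G i) (j : Fin d),
        t ∈ (p i).ker → p j (Pi.mulSingle i t j) = 1 := by
      intro i t j ht
      by_cases h : j = i
      · subst h; simpa [MonoidHom.mem_ker] using ht
      · rw [Pi.mulSingle_eq_of_ne h]; simp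
    have hSgenP : Sgen ⊆ fiberProdPi p := by
      rintro x (hx | hx) <;> rw [Set.mem_iUnion] at hx
      · obtain ⟨i, y, _, rfl⟩ := hx; exact hLmem i y
      · obtain ⟨i, t, ht, rfl⟩ := hx
        intro j k
        rw [hsingleval i t j (hTker i t ht), hsingleval i t k (hTker i t ht)]
    set H := Subgroup.closure Sgen with hHdef
    have hHP : H ≤ fiberProdPi p := (Subgroup.closure_le _).2 hSgenP
    -- every element of each G i occurs as the i-th coordinate of an element of H
    have hproj : ∀ i (x : G i), ∃ h ∈ H, h i = x := by
      intro i x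
      have hle : Subgroup.closure (S i) ≤ H.map (Pi.evalMonoidHom G i) := by
        apply Subgroup.closure_le _ |>.2
        intro y hy
        exact ⟨L i y,
          Subgroup.subset_closure (Or.inl (Set.mem_iUnion.2 ⟨i, ⟨y, hy, rfl⟩⟩)), hLi i y⟩
      have hx : x ∈ H.map (Pi.evalMonoidHom G i) := hle (by rw [hScl i]; trivial)
      obtain ⟨h, hh, hhx⟩ := hx
      exact ⟨h, hh, hhx⟩
    -- the kernel of each p i, placed in coordinate i, lies in H
    have hkerH : ∀ i (k : G i), k ∈ (p i).ker → Pi.mulSingle i k ∈ H := by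
      intro i
      set K : Subgroup (G i) := H.comap (MonoidHom.mulSingle G i) with hKdef
      have hKnormal : K.Normal := by
        constructor
        intro k hk g
        obtain ⟨h, hh, hhg⟩ := hproj i g
        have heq : Pi.mulSingle i (g * k * g⁻¹) = h * Pi.mulSingle i k * h⁻¹ := by
          funext j
          by_cases hj : j = i
          · subst hj; simp [hhg]
          · rw [Pi.mulSingle_eq_of_ne hj]
            simp [Pi.mulSingle_eq_of_ne hj]
        have hmem : h * Pi.mulSingle i k * h⁻¹ ∈ H :=
          H.mul_mem (H.mul_mem hh hk) (H.inv_mem hh)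
        show MonoidHom.mulSingle G i (g * k * g⁻¹) ∈ H
        rw [MonoidHom.mulSingle_apply, heq]
        exact hmem
      have hle : Subgroup.normalClosure (T i) ≤ K :=
        Subgroup.normalClosure_le_normal (fun t ht =>
          Subgroup.subset_closure (Or.inr (Set.mem_iUnion.2 ⟨i, ⟨t, ht, rfl⟩⟩)))
      intro k hk
      rw [← hTcl i] at hk
      exact hle hk
    -- elements supported on kernels lie in H
    have hkerprod : ∀ s : Finset (Fin d), ∀ z : ∀ j, G j,
        (∀ j, z j ∈ (p j).ker) → (∀ j ∉ s, z j = 1) → z ∈ H := by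
      intro s
      induction s using Finset.induction_on with
      | empty =>
          intro z _ h1
          have : z = 1 := funext fun j => h1 j (Finset.notMem_empty j)
          rw [this]; exact H.one_mem
      | @insert a s ha ih =>
          intro z hz h1
          have hz' : Function.update z a 1 ∈ H := by
            apply ih
            · intro j
              by_cases h : j = a
              · subst h; simp
              · rw [Function.update_of_ne h]; exact hz j
            · intro j hj
              by_cases h : j = a
              · subst h; simp
              · rw [Function.update_of_ne h]
                exact h1 j (fun hmem => hj (Finset.mem_of_mem_insert_of_ne hmem h))
          have heq : z = Pi.mulSingle a (z a) * Function.update z a 1 := by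
            funext j
            by_cases h : j = a
            · subst h; simp
            · rw [Pi.mul_apply, Pi.mulSingle_eq_of_ne h, Function.update_of_ne h, one_mul]
          rw [heq]
          exact H.mul_mem (hkerH a (z a) (hz a)) hz'
    refine ⟨Sgen, le_antisymm hHP ?_, hSgenfin⟩
    intro x hx
    obtain ⟨h, hh, hh0⟩ := hproj ⟨0, hd⟩ (x ⟨0, hd⟩)
    suffices hsuf : x * h⁻¹ ∈ H by simpa using H.mul_mem hsuf hh
    set y := x * h⁻¹ with hydef
    have hyP : y ∈ fiberProdPi p :=
      (fiberProdPi p).mul_mem hx ((fiberProdPi p).inv_mem (hHP hh))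
    have hy0 : y ⟨0, hd⟩ = 1 := by simp [hydef, hh0]
    have hyk : ∀ j, y j ∈ (p j).ker := by
      intro j
      have := hyP j ⟨0, hd⟩
      rw [hy0, map_one] at this
      exact this
    exact hkerprod Finset.univ y hyk (fun j hj => absurd (Finset.mem_univ j) hj)
end
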